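/- arXiv:2301.02722 — 6 statements merged into one kernel-verified Lean document; each statement's English description precedes it below -/
import Mathlib

section
/- Let V carry pointwise hypersurface metric data (γ, ℓ, ℓ²) that is null with null generator n, and let U ⊂ V be a subspace on which the restriction h of γ is nondegenerate. Define ℓ♯ ∈ U as the unique vector with h(ℓ♯,X) = ℓ(X) for all X ∈ U, and θ := −(1/2)·(ℓ² − h(ℓ♯,ℓ♯))·n − ℓ♯. Then 𝔱_θ := (θ, 1) is a normal pair of U, and it is 𝒜-null: 𝒜((θ,1),(θ,1)) = γ(θ,θ) + 2ℓ(θ) + ℓ² = 0. -/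
open Module

/-- The symmetric bilinear form `𝒜` on `V × ℝ` associated to pointwise hypersurface
metric data `(γ, ℓ, ℓ²)`. -/
noncomputable def calA {V : Type*} [AddCommGroup V] [Module ℝ V]
    (γ : V →ₗ[ℝ] V →ₗ[ℝ] ℝ) (ℓ : V →ₗ[ℝ] ℝ) (ℓ2 : ℝ) (v w : V × ℝ) : ℝ :=
  γ v.1 w.1 + v.2 * ℓ w.1 + w.2 * ℓ v.1 + v.2 * w.2 * ℓ2

/-- for null pointwise hypersurface metric data with null generator `n`,
and `U ⊆ V` a subspace on which the restriction `h` of `γ` is nondegenerate, with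
`ℓ♯ ∈ U` the unique vector satisfying `h(ℓ♯,X) = ℓ(X)` for all `X ∈ U`, the pair
`(θ, 1)` with `θ = −(1/2)(ℓ² − h(ℓ♯,ℓ♯))·n − ℓ♯` is a normal pair of `U`, and it is
`𝒜`-null: `γ(θ,θ) + 2ℓ(θ) + ℓ² = 0`. -/
theorem theta_normal_pair_and_null
    {V : Type*} [AddCommGroup V] [Module ℝ V] [FiniteDimensional ℝ V]
    (γ : V →ₗ[ℝ] V →ₗ[ℝ] ℝ) (hγsym : ∀ x y : V, γ x y = γ y x)
    (ℓ : V →ₗ[ℝ] ℝ) (ℓ2 : ℝ)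
    (hA : ∀ v : V × ℝ, (∀ w : V × ℝ, calA γ ℓ ℓ2 v w = 0) → v = 0)
    (n : V) (hn : ∀ X : V, γ n X = 0) (hℓn : ℓ n = 1)
    (U : Submodule ℝ V)
    (hUnd : ∀ x ∈ U, (∀ y ∈ U, γ x y = 0) → x = 0)
    (lsharp : V) (hlsU : lsharp ∈ U) (hls : ∀ X ∈ U, γ lsharp X = ℓ X)
    (θ : V) (hθ : θ = (-(1 / 2) * (ℓ2 - γ lsharp lsharp)) • n - lsharp) :
    (∀ X ∈ U, (1 : ℝ) * ℓ X + γ θ X = 0) ∧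
      γ θ θ + 2 * ℓ θ + ℓ2 = 0 := by
  have hnl : γ lsharp n = 0 := by rw [hγsym]; exact hn lsharp
  have hll : ℓ lsharp = γ lsharp lsharp := (hls lsharp hlsU).symm
  constructor
  · intro X hX
    simp [hθ, map_smul, map_sub, hn, hls X hX]
  · simp [hθ, map_smul, map_sub, hn, hnl, hℓn, hll]
    ring
end

section
/- Let V have dimension m, carry pointwise hypersurface metric data (γ, ℓ, ℓ²) that is null with null generator n, and let U ⊂ V be a subspace of dimension m−1 on which the restriction h of γ is nondegenerate; let θ := −(1/2)·(ℓ² − h(ℓ♯,ℓ♯))·n − ℓ♯. Then (n,0) and (θ,1) are linearly independent 𝒜-null normal pairs of U with 𝒜((n,0),(θ,1)) = 1, and every 𝒜-null normal pair of U is a scalar multiple of (n,0) or a scalar multiple of (θ,1). -/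
open Module

/-- `(n,0)` and `(θ,1)` are linearly independent `𝒜`-null normal pairs
of `U` with `𝒜((n,0),(θ,1)) = 1`, and every `𝒜`-null normal pair of `U` is a scalar
multiple of `(n,0)` or of `(θ,1)`. -/
theorem null_normal_pairs_classification
    {V : Type*} [AddCommGroup V] [Module ℝ V] [FiniteDimensional ℝ V]
    (m : ℕ) (hm : 1 ≤ m) (hV : finrank ℝ V = m)
    (γ : V →ₗ[ℝ] V →ₗ[ℝ] ℝ) (hγsym : ∀ x y : V, γ x y = γ y x)
    (ℓ : V →ₗ[ℝ] ℝ) (ℓ2 : ℝ)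
    (hA : ∀ v : V × ℝ, (∀ w : V × ℝ, calA γ ℓ ℓ2 v w = 0) → v = 0)
    (n : V) (hn : ∀ X : V, γ n X = 0) (hℓn : ℓ n = 1)
    (U : Submodule ℝ V) (hU : finrank ℝ U = m - 1)
    (hUnd : ∀ x ∈ U, (∀ y ∈ U, γ x y = 0) → x = 0)
    (lsharp : V) (hlsU : lsharp ∈ U) (hls : ∀ X ∈ U, γ lsharp X = ℓ X)
    (θ : V) (hθ : θ = (-(1 / 2) * (ℓ2 - γ lsharp lsharp)) • n - lsharp) :
    LinearIndependent ℝ ![((n, (0 : ℝ)) : V × ℝ), ((θ, (1 : ℝ)) : V × ℝ)] ∧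
    (∀ X ∈ U, calA γ ℓ ℓ2 (n, 0) (X, 0) = 0) ∧
    (∀ X ∈ U, calA γ ℓ ℓ2 (θ, 1) (X, 0) = 0) ∧
    calA γ ℓ ℓ2 (n, 0) (n, 0) = 0 ∧
    calA γ ℓ ℓ2 (θ, 1) (θ, 1) = 0 ∧
    calA γ ℓ ℓ2 (n, 0) (θ, 1) = 1 ∧
    (∀ p : V × ℝ, (∀ X ∈ U, calA γ ℓ ℓ2 p (X, 0) = 0) →
      calA γ ℓ ℓ2 p p = 0 →
      (∃ c : ℝ, p = c • ((n, (0 : ℝ)) : V × ℝ)) ∨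
      (∃ c : ℝ, p = c • ((θ, (1 : ℝ)) : V × ℝ))) := by
  -- basic facts
  set c : ℝ := -(1 / 2) * (ℓ2 - γ lsharp lsharp) with hc
  have hγnθ : γ n θ = 0 := hn θ
  have hγθn : γ θ n = 0 := by rw [hγsym]; exact hn θ
  have hγθX : ∀ X ∈ U, γ θ X = -ℓ X := by
    intro X hX
    rw [hθ]
    simp only [map_smul, map_sub, LinearMap.sub_apply, LinearMap.smul_apply,
      smul_eq_mul, hn X, hls X hX]
    ring
  have hℓls : ℓ lsharp = γ lsharp lsharp := (hls lsharp hlsU).symm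
  have hℓθ : ℓ θ = c - γ lsharp lsharp := by
    rw [hθ]; simp [hℓn, hℓls]
  have hγθθ : γ θ θ = γ lsharp lsharp := by
    nth_rewrite 1 [hθ]
    simp only [map_smul, map_sub, LinearMap.sub_apply, LinearMap.smul_apply,
      smul_eq_mul, hn θ]
    rw [hγsym lsharp θ, hγθX lsharp hlsU, hℓls]
    ring
  have hn0 : n ≠ 0 := by
    intro h; rw [h, map_zero] at hℓn; exact one_ne_zero hℓn.symm
  have hnU : n ∉ U := fun hmem => hn0 (hUnd n hmem fun y _ => hn y)
  -- decomposition V = U + span n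
  have hdec : ∀ v : V, ∃ u ∈ U, ∃ t : ℝ, v = u + t • n := by
    have hsup : U ⊔ Submodule.span ℝ {n} = ⊤ := by
      apply Submodule.eq_top_of_finrank_eq
      have h1 : U < U ⊔ Submodule.span ℝ {n} := by
        refine lt_of_le_of_ne le_sup_left fun h => hnU ?_
        rw [h]
        exact Submodule.mem_sup_right (Submodule.mem_span_singleton_self n)
      have h2 := Submodule.finrank_lt_finrank_of_lt h1
      have h3 : finrank ℝ ↥(U ⊔ Submodule.span ℝ {n}) ≤ finrank ℝ V :=
        Submodule.finrank_le _
      rw [hU] at h2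
      rw [hV] at h3 ⊢
      omega
    intro v
    have hv : v ∈ U ⊔ Submodule.span ℝ {n} := hsup ▸ Submodule.mem_top
    obtain ⟨u, hu, w, hw, hvw⟩ := Submodule.mem_sup.mp hv
    obtain ⟨t, rfl⟩ := Submodule.mem_span_singleton.mp hw
    exact ⟨u, hu, t, hvw.symm⟩
  refine ⟨?_, ?_, ?_, ?_, ?_, ?_, ?_⟩
  · rw [LinearIndependent.pair_iff]
    intro s t hst
    have h2 : s * 0 + t * 1 = 0 := congrArg Prod.snd hst
    have ht : t = 0 := by linarith
    subst ht
    have h1 : s • n = 0 := by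
      have := congrArg Prod.fst hst
      simpa using this
    rcases smul_eq_zero.mp h1 with hs | h
    · exact ⟨hs, rfl⟩
    · exact absurd h hn0
  · intro X hX; simp [calA, hn X]
  · intro X hX; simp [calA, hγθX X hX]
  · simp [calA, hn n]
  · simp only [calA, hγθθ, hℓθ, hc]; ring
  · simp [calA, hγnθ, hℓn]
  · intro p hnorm hnull
    obtain ⟨u, hu, t, hW⟩ := hdec (p.1 - p.2 • θ)
    have hu0 : u = 0 := by
      apply hUnd u hu
      intro y hy
      have h1 : γ p.1 y + p.2 * ℓ y = 0 := by
        have := hnorm y hy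
        simp only [calA] at this
        linarith [this]
      have h2 : γ (p.1 - p.2 • θ) y = 0 := by
        simp only [map_sub, map_smul, LinearMap.sub_apply, LinearMap.smul_apply,
          smul_eq_mul, hγθX y hy]
        linarith
      rw [hW] at h2
      simpa [hn y] using h2
    rw [hu0, zero_add] at hW
    have hp1 : p.1 = p.2 • θ + t • n := by
      have := hW
      rw [sub_eq_iff_eq_add] at this
      rw [this]; abel
    have hkey : 2 * p.2 * t = 0 := by
      have hexp : calA γ ℓ ℓ2 p p = 2 * p.2 * t := by
        simp only [calA]
        rw [hp1]
        simp only [map_add, map_smul, LinearMap.add_apply, LinearMap.smul_apply,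
          smul_eq_mul, hγθθ, hγθn, hγnθ, hn n, hℓθ, hℓn, hc]
        ring
      rw [hnull] at hexp
      linarith
    rcases mul_eq_zero.mp hkey with h | ht
    · have hp2 : p.2 = 0 := by
        rcases mul_eq_zero.mp h with h' | h'
        · linarith
        · exact h'
      left
      refine ⟨t, ?_⟩
      have : p = (p.1, p.2) := rfl
      rw [this, hp1, hp2]
      simp [Prod.ext_iff]
    · right
      refine ⟨p.2, ?_⟩
      have : p = (p.1, p.2) := rfl
      rw [this, hp1, ht]
      simp [Prod.ext_iff]
end

section
/- Let V carry pointwise hypersurface metric data (γ, ℓ, ℓ²), let U ⊂ V be a subspace, and let 𝔱₁ = (T₁,C₁), 𝔱₂ = (T₂,C₂) be normal pairs of U. Set M₁₂ := γ(T₁,T₂) + C₁·ℓ(T₂) + C₂·ℓ(T₁) + C₁·C₂·ℓ² (that is, M₁₂ = 𝒜(𝔱₁,𝔱₂)). Then M₁₂ is gauge invariant: for any gauge parameters (z,ζ), computing the same expression with the transformed data (γ' = γ, ℓ' = z(ℓ+γ(ζ,·)), ℓ²' = z²(ℓ²+2ℓ(ζ)+γ(ζ,ζ))) and the transformed pairs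 𝔱ᵢ' = (Tᵢ − Cᵢζ, z⁻¹Cᵢ) yields the same value: 𝒜'(𝔱₁',𝔱₂') = 𝒜(𝔱₁,𝔱₂). -/
open Module

/-- for normal pairs `𝔱₁ = (T₁,C₁)`, `𝔱₂ = (T₂,C₂)` of `U`, the scalar
`M₁₂ = 𝒜(𝔱₁,𝔱₂)` is gauge invariant: computing it with the gauge-transformed data
`(γ' = γ, ℓ' = z(ℓ+γ(ζ,·)), ℓ²' = z²(ℓ²+2ℓ(ζ)+γ(ζ,ζ)))` and the transformed pairs
`𝔱ᵢ' = (Tᵢ − Cᵢζ, z⁻¹Cᵢ)` gives the same value. -/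
theorem M_gauge_invariant
    {V : Type*} [AddCommGroup V] [Module ℝ V]
    (γ : V →ₗ[ℝ] V →ₗ[ℝ] ℝ) (hγsym : ∀ x y : V, γ x y = γ y x)
    (ℓ : V →ₗ[ℝ] ℝ) (ℓ2 : ℝ)
    (U : Submodule ℝ V)
    (z : ℝ) (hz : z ≠ 0) (ζ : V)
    (T₁ T₂ : V) (C₁ C₂ : ℝ)
    (hNP₁ : ∀ X ∈ U, C₁ * ℓ X + γ T₁ X = 0)
    (hNP₂ : ∀ X ∈ U, C₂ * ℓ X + γ T₂ X = 0) :
    calA γ (z • (ℓ + γ ζ)) (z ^ 2 * (ℓ2 + 2 * ℓ ζ + γ ζ ζ))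
        (T₁ - C₁ • ζ, z⁻¹ * C₁) (T₂ - C₂ • ζ, z⁻¹ * C₂)
      = calA γ ℓ ℓ2 (T₁, C₁) (T₂, C₂) := by
  simp only [calA, map_sub, map_smul, LinearMap.sub_apply, LinearMap.smul_apply,
    LinearMap.add_apply, smul_eq_mul, LinearMap.map_smulₛₗ, RingHom.id_apply]
  rw [hγsym ζ T₁, hγsym ζ T₂]
  field_simp
  ring
end

section
/- Let V and V̄ be real vector spaces of the same finite dimension m ≥ 2, each carrying pointwise hypersurface metric data (γ,ℓ,ℓ²) and (γ̄,ℓ̄,ℓ̄²) that is null with null generators n and n̄ respectively (and 𝒜, 𝒜̄ nondegenerate). Let U ⊂ V and Ū ⊂ V̄ be subspaces of dimension m−1 on which the restrictions h := γ|_U and h̄ := γ̄|_Ū are nondegenerate, let φ : U → Ū be a linear bijection with h̄(φ(X),φ(Y)) = h(X,Y) for all X,Y ∈ U, and let μ ∈ ℝ, μ ≠ 0. Then there exists a unique linear map Ψ : V × ℝ → V̄ × ℝ such that (1) Ψ((X,0)) = (φ(X),0) for all X ∈ U, (2) 𝒜̄(Ψ(v),Ψ(w)) = 𝒜(v,w)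 for all v,w ∈ V × ℝ, and (3) 𝒜̄((n̄,0), Ψ((n,0))) = μ; moreover this Ψ is invertible. -/
open Module

/-!
Complete `(n, 0)` by `(w, 1)`, with `w` chosen so that `(w, 1)` is `𝒜`-null and `𝒜`-orthogonal to
`U × 0`. The vectors `(X, 0)` (`X ∈ U`), `(n, 0)`, `(w, 1)` then form a frame of `V × ℝ` in which
`𝒜` is `h ⊕ H`, where `H` is the hyperbolic plane, and likewise on `V̄ × ℝ`. In these frames `Ψ` is
`φ` on `U`, so it preserves `H`; the image of `(n, 0)` is null and pairs to `μ` with `(n̄, 0)`, which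
forces `(n, 0) ↦ μ (w̄, 1)` and then `(w, 1) ↦ μ⁻¹ (n̄, 0)`. This map is invertible.
-/

section Transport

variable {K Kb M Mb M' Mb' : Type*} [AddCommGroup K] [Module ℝ K] [AddCommGroup Kb] [Module ℝ Kb]
  [AddCommGroup M] [Module ℝ M] [AddCommGroup Mb] [Module ℝ Mb]
  [AddCommGroup M'] [Module ℝ M'] [AddCommGroup Mb'] [Module ℝ Mb']

/-- Conditions (1)–(3) on `Ψ`, for arbitrary forms `A`, `Ab` so that they can be transported
along isometries; `ι`, `ιb` embed the domain and codomain of `φ`. -/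
def IsNormalizedIsometry (A : M → M → ℝ) (Ab : Mb → Mb → ℝ) (ι : K →ₗ[ℝ] M) (ιb : Kb →ₗ[ℝ] Mb)
    (φ : K ≃ₗ[ℝ] Kb) (N : M) (Nb : Mb) (μ : ℝ) (Ψ : M →ₗ[ℝ] Mb) : Prop :=
  (∀ X, Ψ (ι X) = ιb (φ X)) ∧ (∀ v w, Ab (Ψ v) (Ψ w) = A v w) ∧ Ab Nb (Ψ N) = μ

theorem isNormalizedIsometry_conj_iff {A : M → M → ℝ} {Ab : Mb → Mb → ℝ} {A' : M' → M' → ℝ}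
    {Ab' : Mb' → Mb' → ℝ} {ι : K →ₗ[ℝ] M} {ιb : Kb →ₗ[ℝ] Mb} {ι' : K →ₗ[ℝ] M'}
    {ιb' : Kb →ₗ[ℝ] Mb'} {φ : K ≃ₗ[ℝ] Kb} {N : M} {Nb : Mb} {N' : M'} {Nb' : Mb'} {μ : ℝ}
    (e : M' ≃ₗ[ℝ] M) (eb : Mb' ≃ₗ[ℝ] Mb)
    (he : ∀ p q, A (e p) (e q) = A' p q) (heb : ∀ p q, Ab (eb p) (eb q) = Ab' p q)
    (hι : ∀ X, e (ι' X) = ι X) (hιb : ∀ X, eb (ιb' X) = ιb X) (hN : e N' = N) (hNb : eb Nb' = Nb)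
    (Ψ : M →ₗ[ℝ] Mb) :
    IsNormalizedIsometry A Ab ι ιb φ N Nb μ Ψ ↔
      IsNormalizedIsometry A' Ab' ι' ιb' φ N' Nb' μ (eb.symm.toLinearMap ∘ₗ Ψ ∘ₗ e.toLinearMap) := by
  simp only [IsNormalizedIsometry, LinearMap.comp_apply, LinearEquiv.coe_coe, ← heb, ← he,
    LinearEquiv.apply_symm_apply, hι, hN, hNb, e.surjective.forall₂, eb.symm_apply_eq, hιb]

end Transport

section HyperbolicSum

variable {E F : Type*} [AddCommGroup E] [Module ℝ E] [AddCommGroup F] [Module ℝ F]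

def hyperbolicSum (h : E →ₗ[ℝ] E →ₗ[ℝ] ℝ) (p q : E × ℝ × ℝ) : ℝ :=
  h p.1 q.1 + p.2.1 * q.2.2 + p.2.2 * q.2.1

theorem eq_zero_of_forall_hyperbolicSum_eq_zero {h : E →ₗ[ℝ] E →ₗ[ℝ] ℝ} (hh : h.SeparatingLeft)
    {p : E × ℝ × ℝ} (hp : ∀ q, hyperbolicSum h p q = 0) : p = 0 := by
  obtain ⟨X, s, t⟩ := p
  have hX : X = 0 := hh X fun Y => by simpa [hyperbolicSum] using hp (Y, 0, 0)
  have hs : s = 0 := by simpa [hyperbolicSum] using hp (0, 0, 1)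
  have ht : t = 0 := by simpa [hyperbolicSum] using hp (0, 1, 0)
  simp [hX, hs, ht]

noncomputable def hyperbolicScale (μ : ℝ) (hμ : μ ≠ 0) : (ℝ × ℝ) ≃ₗ[ℝ] ℝ × ℝ :=
  (LinearEquiv.prodComm ℝ ℝ ℝ).trans
    ((LinearEquiv.smulOfNeZero ℝ ℝ μ⁻¹ (inv_ne_zero hμ)).prodCongr
      (LinearEquiv.smulOfNeZero ℝ ℝ μ hμ))

@[simp]
theorem hyperbolicScale_apply (μ : ℝ) (hμ : μ ≠ 0) (s t : ℝ) :
    hyperbolicScale μ hμ (s, t) = (μ⁻¹ * t, μ * s) := rfl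

theorem hyperbolicSum_prodCongr_hyperbolicScale {h : E →ₗ[ℝ] E →ₗ[ℝ] ℝ}
    {hb : F →ₗ[ℝ] F →ₗ[ℝ] ℝ} {φ : E ≃ₗ[ℝ] F} (hφ : ∀ X Y, hb (φ X) (φ Y) = h X Y)
    {μ : ℝ} (hμ : μ ≠ 0) (p q : E × ℝ × ℝ) :
    hyperbolicSum hb (φ.prodCongr (hyperbolicScale μ hμ) p)
      (φ.prodCongr (hyperbolicScale μ hμ) q) = hyperbolicSum h p q := by
  obtain ⟨X, s, t⟩ := p
  obtain ⟨Y, s', t'⟩ := q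
  simp only [hyperbolicSum, LinearEquiv.prodCongr_apply, hyperbolicScale_apply, hφ]
  field_simp
  ring

theorem IsNormalizedIsometry.apply_hyperbolic_basis {h : E →ₗ[ℝ] E →ₗ[ℝ] ℝ}
    {hb : F →ₗ[ℝ] F →ₗ[ℝ] ℝ} (hhb : hb.SeparatingLeft) {φ : E ≃ₗ[ℝ] F} {μ : ℝ} (hμ : μ ≠ 0)
    {Φ : E × ℝ × ℝ →ₗ[ℝ] F × ℝ × ℝ}
    (hΦ : IsNormalizedIsometry (hyperbolicSum h) (hyperbolicSum hb) (LinearMap.inl ℝ E (ℝ × ℝ))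
      (LinearMap.inl ℝ F (ℝ × ℝ)) φ (0, 1, 0) (0, 1, 0) μ Φ) :
    Φ (0, 1, 0) = (0, 0, μ) ∧ Φ (0, 0, 1) = (0, μ⁻¹, 0) := by
  obtain ⟨hU, hA, hN⟩ := hΦ
  replace hU : ∀ X, Φ (X, 0) = (φ X, 0) := hU
  have hperp : ∀ Y : ℝ × ℝ, (Φ (0, Y)).1 = 0 := fun Y => hhb _ fun Z => by
    obtain ⟨X, rfl⟩ := φ.surjective Z
    simpa [hyperbolicSum, hU] using hA (0, Y) (X, 0)
  have hN₂ : (Φ (0, 1, 0)).2.2 = μ := by simpa [hyperbolicSum] using hN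
  have hNN := hA (0, 1, 0) (0, 1, 0)
  have hNL := hA (0, 1, 0) (0, 0, 1)
  have hLL := hA (0, 0, 1) (0, 0, 1)
  simp only [hyperbolicSum, hperp, map_zero] at hNN hNL hLL
  rw [hN₂] at hNN hNL
  have hN₁ : (Φ (0, 1, 0)).2.1 = 0 := by
    simpa [hμ] using (show (Φ (0, 1, 0)).2.1 * μ = 0 by linarith)
  have hL₁ : (Φ (0, 0, 1)).2.1 = μ⁻¹ := by
    rw [hN₁] at hNL
    field_simp
    linarith
  have hL₂ : (Φ (0, 0, 1)).2.2 = 0 := by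
    rw [hL₁] at hLL
    simpa [hμ] using (show μ⁻¹ * (Φ (0, 0, 1)).2.2 = 0 by linarith)
  exact ⟨Prod.ext (hperp _) (Prod.ext hN₁ hN₂), Prod.ext (hperp _) (Prod.ext hL₁ hL₂)⟩

theorem isNormalizedIsometry_hyperbolicSum_iff {h : E →ₗ[ℝ] E →ₗ[ℝ] ℝ}
    {hb : F →ₗ[ℝ] F →ₗ[ℝ] ℝ} (hhb : hb.SeparatingLeft) {φ : E ≃ₗ[ℝ] F}
    (hφ : ∀ X Y, hb (φ X) (φ Y) = h X Y) {μ : ℝ} (hμ : μ ≠ 0) (Φ : E × ℝ × ℝ →ₗ[ℝ] F × ℝ × ℝ) :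
    IsNormalizedIsometry (hyperbolicSum h) (hyperbolicSum hb) (LinearMap.inl ℝ E (ℝ × ℝ))
        (LinearMap.inl ℝ F (ℝ × ℝ)) φ (0, 1, 0) (0, 1, 0) μ Φ ↔
      Φ = (φ.prodCongr (hyperbolicScale μ hμ)).toLinearMap := by
  refine ⟨fun hΦ => ?_, ?_⟩
  · obtain ⟨hN, hL⟩ := hΦ.apply_hyperbolic_basis hhb hμ
    refine LinearMap.prod_ext (LinearMap.ext fun X => ?_)
      (LinearMap.prod_ext (LinearMap.ext_ring ?_) (LinearMap.ext_ring ?_))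
    · simpa using hΦ.1 X
    · simpa using hN
    · simpa using hL
  · rintro rfl
    refine ⟨fun X => ?_, hyperbolicSum_prodCongr_hyperbolicScale hφ hμ, ?_⟩
    · simp
    · simp [hyperbolicSum]

end HyperbolicSum

section NullFrame

variable {V : Type*} [AddCommGroup V] [Module ℝ V] {γ : V →ₗ[ℝ] V →ₗ[ℝ] ℝ} {ℓ : V →ₗ[ℝ] ℝ}
  {ℓ2 : ℝ} {n : V} {U : Submodule ℝ V}

theorem separatingLeft_compl₁₂_subtype (hU : ∀ x ∈ U, (∀ y ∈ U, γ x y = 0) → x = 0) :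
    (γ.compl₁₂ U.subtype U.subtype).SeparatingLeft :=
  fun x hx => Subtype.ext (hU x x.2 fun y hy => hx ⟨y, hy⟩)

theorem exists_nullFrame_vector [FiniteDimensional ℝ V] (hγ : ∀ x y, γ x y = γ y x)
    (hn : ∀ X, γ n X = 0) (hℓn : ℓ n = 1) (hU : (γ.compl₁₂ U.subtype U.subtype).SeparatingLeft) :
    ∃ w : V, (∀ X ∈ U, γ w X = -ℓ X) ∧ γ w w + 2 * ℓ w + ℓ2 = 0 := by
  set h := γ.compl₁₂ U.subtype U.subtype
  have hsurj : Function.Surjective h :=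
    (LinearMap.injective_iff_surjective_of_finrank_eq_finrank Subspace.dual_finrank_eq.symm).1
      (LinearMap.ker_eq_bot.1 (LinearMap.separatingLeft_iff_ker_eq_bot.1 hU))
  obtain ⟨u, hu⟩ := hsurj (-(ℓ ∘ₗ U.subtype))
  refine ⟨u + (-(γ u u + 2 * ℓ u + ℓ2) / 2) • n, fun X hX => ?_, ?_⟩
  · simpa [hn, h] using LinearMap.congr_fun hu ⟨X, hX⟩
  · simp only [map_add, map_smul, LinearMap.add_apply, LinearMap.smul_apply, hn, hγ u n, hℓn,
      smul_eq_mul]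
    ring

def nullFrame (U : Submodule ℝ V) (n w : V) : U × ℝ × ℝ →ₗ[ℝ] V × ℝ :=
  (LinearMap.inl ℝ V ℝ ∘ₗ U.subtype).coprod
    ((LinearMap.toSpanSingleton ℝ _ (n, 0)).coprod (LinearMap.toSpanSingleton ℝ _ (w, 1)))

@[simp]
theorem nullFrame_apply (w : V) (p : U × ℝ × ℝ) :
    nullFrame U n w p = ((p.1 : V) + p.2.1 • n + p.2.2 • w, p.2.2) := by
  simp [nullFrame, add_assoc]

theorem calA_nullFrame (hγ : ∀ x y, γ x y = γ y x) (hn : ∀ X, γ n X = 0) (hℓn : ℓ n = 1) {w : V}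
    (hwU : ∀ X ∈ U, γ w X = -ℓ X) (hww : γ w w + 2 * ℓ w + ℓ2 = 0) (p q : U × ℝ × ℝ) :
    calA γ ℓ ℓ2 (nullFrame U n w p) (nullFrame U n w q) =
      hyperbolicSum (γ.compl₁₂ U.subtype U.subtype) p q := by
  obtain ⟨X, s, t⟩ := p
  obtain ⟨Y, s', t'⟩ := q
  have hXw : γ X w = -ℓ X := by rw [hγ]; exact hwU X X.2
  simp only [calA, hyperbolicSum, nullFrame_apply, map_add, map_smul, LinearMap.add_apply,
    LinearMap.smul_apply, smul_eq_mul, hn, hγ _ n, hXw, hwU Y Y.2, hℓn,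
    LinearMap.compl₁₂_apply, Submodule.subtype_apply]
  linear_combination t * t' * hww

theorem nullFrame_bijective [FiniteDimensional ℝ V] (hγ : ∀ x y, γ x y = γ y x)
    (hn : ∀ X, γ n X = 0) (hℓn : ℓ n = 1) (hU : (γ.compl₁₂ U.subtype U.subtype).SeparatingLeft)
    (hdim : finrank ℝ U + 1 = finrank ℝ V) {w : V}
    (hwU : ∀ X ∈ U, γ w X = -ℓ X) (hww : γ w w + 2 * ℓ w + ℓ2 = 0) :
    Function.Bijective (nullFrame U n w) := by
  have hinj : Function.Injective (nullFrame U n w) := by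
    refine (injective_iff_map_eq_zero _).2 fun p hp => eq_zero_of_forall_hyperbolicSum_eq_zero hU
      fun q => ?_
    rw [← calA_nullFrame hγ hn hℓn hwU hww, hp]
    simp [calA]
  refine ⟨hinj, (LinearMap.injective_iff_surjective_of_finrank_eq_finrank ?_).1 hinj⟩
  simp only [finrank_prod, finrank_self, ← hdim]

end NullFrame

theorem partial_isometry_exists_unique_general
    {V Vb : Type*} [AddCommGroup V] [Module ℝ V] [FiniteDimensional ℝ V]
    [AddCommGroup Vb] [Module ℝ Vb] [FiniteDimensional ℝ Vb]
    (m : ℕ) (hm : 2 ≤ m) (hV : finrank ℝ V = m) (hVb : finrank ℝ Vb = m)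
    (γ : V →ₗ[ℝ] V →ₗ[ℝ] ℝ) (hγsym : ∀ x y : V, γ x y = γ y x)
    (ℓ : V →ₗ[ℝ] ℝ) (ℓ2 : ℝ)
    (n : V) (hn : ∀ X : V, γ n X = 0) (hℓn : ℓ n = 1)
    (γb : Vb →ₗ[ℝ] Vb →ₗ[ℝ] ℝ) (hγbsym : ∀ x y : Vb, γb x y = γb y x)
    (ℓb : Vb →ₗ[ℝ] ℝ) (ℓ2b : ℝ)
    (nb : Vb) (hnb : ∀ X : Vb, γb nb X = 0) (hℓnb : ℓb nb = 1)
    (U : Submodule ℝ V) (hU : finrank ℝ U = m - 1)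
    (hUnd : ∀ x ∈ U, (∀ y ∈ U, γ x y = 0) → x = 0)
    (Ub : Submodule ℝ Vb) (hUb : finrank ℝ Ub = m - 1)
    (hUbnd : ∀ x ∈ Ub, (∀ y ∈ Ub, γb x y = 0) → x = 0)
    (φ : U ≃ₗ[ℝ] Ub)
    (hφ : ∀ X Y : U, γb (φ X : Vb) (φ Y : Vb) = γ (X : V) (Y : V))
    (μ : ℝ) (hμ : μ ≠ 0) :
    (∃! Ψ : (V × ℝ) →ₗ[ℝ] (Vb × ℝ),
        (∀ X : U, Ψ ((X : V), 0) = ((φ X : Vb), 0)) ∧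
        (∀ v w : V × ℝ, calA γb ℓb ℓ2b (Ψ v) (Ψ w) = calA γ ℓ ℓ2 v w) ∧
        calA γb ℓb ℓ2b (nb, 0) (Ψ (n, 0)) = μ) ∧
    (∀ Ψ : (V × ℝ) →ₗ[ℝ] (Vb × ℝ),
        (∀ X : U, Ψ ((X : V), 0) = ((φ X : Vb), 0)) →
        (∀ v w : V × ℝ, calA γb ℓb ℓ2b (Ψ v) (Ψ w) = calA γ ℓ ℓ2 v w) →
        calA γb ℓb ℓ2b (nb, 0) (Ψ (n, 0)) = μ →
        Function.Bijective Ψ) := by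
  have hUsep := separatingLeft_compl₁₂_subtype hUnd
  have hUbsep := separatingLeft_compl₁₂_subtype hUbnd
  obtain ⟨w, hwU, hww⟩ := exists_nullFrame_vector (ℓ2 := ℓ2) hγsym hn hℓn hUsep
  obtain ⟨wb, hwbU, hwwb⟩ := exists_nullFrame_vector (ℓ2 := ℓ2b) hγbsym hnb hℓnb hUbsep
  let e := LinearEquiv.ofBijective _
    (nullFrame_bijective hγsym hn hℓn hUsep (by omega) hwU hww)
  let eb := LinearEquiv.ofBijective _
    (nullFrame_bijective hγbsym hnb hℓnb hUbsep (by omega) hwbU hwwb)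
  let Ψ₀ := e.symm.trans ((φ.prodCongr (hyperbolicScale μ hμ)).trans eb)
  have hiff : ∀ Ψ, IsNormalizedIsometry (calA γ ℓ ℓ2) (calA γb ℓb ℓ2b)
      (LinearMap.inl ℝ V ℝ ∘ₗ U.subtype) (LinearMap.inl ℝ Vb ℝ ∘ₗ Ub.subtype) φ (n, 0) (nb, 0)
      μ Ψ ↔ Ψ = Ψ₀ := fun Ψ => by
    refine (isNormalizedIsometry_conj_iff e eb (calA_nullFrame hγsym hn hℓn hwU hww)
      (calA_nullFrame hγbsym hnb hℓnb hwbU hwwb) ?_ ?_ ?_ ?_ Ψ).trans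
      ((isNormalizedIsometry_hyperbolicSum_iff hUbsep hφ hμ _).trans ?_)
    · simp [e]
    · simp [eb]
    · simp [e]
    · simp [eb]
    · rw [LinearEquiv.toLinearMap_symm_comp_eq, ← LinearEquiv.eq_comp_toLinearMap_symm]
      rfl
  refine ⟨⟨Ψ₀, (hiff Ψ₀).2 rfl, fun Ψ hΨ => (hiff Ψ).1 hΨ⟩, fun Ψ h₁ h₂ h₃ => ?_⟩
  rw [(hiff Ψ).1 ⟨h₁, h₂, h₃⟩]
  exact Ψ₀.bijective

/-- given null nondegenerate pointwise hypersurface metric data on `V`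
and `V̄` of the same dimension `m ≥ 2`, subspaces `U`, `Ū` of dimension `m−1` with
nondegenerate induced metrics, an isometry `φ : U → Ū` and `μ ≠ 0`, there is a
unique linear map `Ψ : V × ℝ → V̄ × ℝ` restricting to `φ` on `U × {0}`, preserving
the forms `𝒜`, `𝒜̄`, and normalized by `𝒜̄((n̄,0),Ψ(n,0)) = μ`; moreover any such
`Ψ` is invertible. -/
theorem partial_isometry_exists_unique
    {V Vb : Type*} [AddCommGroup V] [Module ℝ V] [FiniteDimensional ℝ V]
    [AddCommGroup Vb] [Module ℝ Vb] [FiniteDimensional ℝ Vb]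
    (m : ℕ) (hm : 2 ≤ m) (hV : finrank ℝ V = m) (hVb : finrank ℝ Vb = m)
    (γ : V →ₗ[ℝ] V →ₗ[ℝ] ℝ) (hγsym : ∀ x y : V, γ x y = γ y x)
    (ℓ : V →ₗ[ℝ] ℝ) (ℓ2 : ℝ)
    (hA : ∀ v : V × ℝ, (∀ w : V × ℝ, calA γ ℓ ℓ2 v w = 0) → v = 0)
    (n : V) (hn : ∀ X : V, γ n X = 0) (hℓn : ℓ n = 1)
    (γb : Vb →ₗ[ℝ] Vb →ₗ[ℝ] ℝ) (hγbsym : ∀ x y : Vb, γb x y = γb y x)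
    (ℓb : Vb →ₗ[ℝ] ℝ) (ℓ2b : ℝ)
    (hAb : ∀ v : Vb × ℝ, (∀ w : Vb × ℝ, calA γb ℓb ℓ2b v w = 0) → v = 0)
    (nb : Vb) (hnb : ∀ X : Vb, γb nb X = 0) (hℓnb : ℓb nb = 1)
    (U : Submodule ℝ V) (hU : finrank ℝ U = m - 1)
    (hUnd : ∀ x ∈ U, (∀ y ∈ U, γ x y = 0) → x = 0)
    (Ub : Submodule ℝ Vb) (hUb : finrank ℝ Ub = m - 1)
    (hUbnd : ∀ x ∈ Ub, (∀ y ∈ Ub, γb x y = 0) → x = 0)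
    (φ : U ≃ₗ[ℝ] Ub)
    (hφ : ∀ X Y : U, γb (φ X : Vb) (φ Y : Vb) = γ (X : V) (Y : V))
    (μ : ℝ) (hμ : μ ≠ 0) :
    (∃! Ψ : (V × ℝ) →ₗ[ℝ] (Vb × ℝ),
        (∀ X : U, Ψ ((X : V), 0) = ((φ X : Vb), 0)) ∧
        (∀ v w : V × ℝ, calA γb ℓb ℓ2b (Ψ v) (Ψ w) = calA γ ℓ ℓ2 v w) ∧
        calA γb ℓb ℓ2b (nb, 0) (Ψ (n, 0)) = μ) ∧
    (∀ Ψ : (V × ℝ) →ₗ[ℝ] (Vb × ℝ),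
        (∀ X : U, Ψ ((X : V), 0) = ((φ X : Vb), 0)) →
        (∀ v w : V × ℝ, calA γb ℓb ℓ2b (Ψ v) (Ψ w) = calA γ ℓ ℓ2 v w) →
        calA γb ℓb ℓ2b (nb, 0) (Ψ (n, 0)) = μ →
        Function.Bijective Ψ) :=
  partial_isometry_exists_unique_general m hm hV hVb γ hγsym ℓ ℓ2 n hn hℓn γb hγbsym ℓb ℓ2b nb hnb
    hℓnb U hU hUnd Ub hUb hUbnd φ hφ μ hμ
end

section
/- In the setting of the unique ∂-isometry Ψ determined by the isometry φ : (U,h) → (Ū,h̄) and the nonzero scalar μ (i.e. Ψ((X,0)) = (φ(X),0) for X ∈ U, 𝒜̄(Ψ(v),Ψ(w)) = 𝒜(v,w) for all v,w, and 𝒜̄((n̄,0),Ψ((n,0))) = μ), one has Ψ((n,0)) = μ·(θ̄,1) and Ψ((θ,1)) = μ⁻¹·(n̄,0). Consequently, writing any v ∈ V uniquely as v = σ·n + v∥ with σ ∈ ℝ and v∥ ∈ U, and setting α := −(1/2)(ℓ² − h(ℓ♯,ℓ♯)) and ᾱ := −(1/2)(ℓ̄² − h̄(ℓ̄♯,ℓ̄♯))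 (so θ = α·n − ℓ♯ and θ̄ = ᾱ·n̄ − ℓ̄♯): Ψ((v,0)) = (φ(v∥) + σ·μ·(ᾱ·n̄ − ℓ̄♯), σ·μ) and Ψ((0,1)) = ((μ⁻¹ − μ·α·ᾱ)·n̄ + μ·α·ℓ̄♯ + φ(ℓ♯), −μ·α). -/
open Module

lemma aux_span_decomp {W : Type*} [AddCommGroup W] [Module ℝ W] [FiniteDimensional ℝ W]
    {m : ℕ} (hm : 2 ≤ m) (hW : finrank ℝ W = m) (U : Submodule ℝ W)
    (hU : finrank ℝ U = m - 1) {n : W} (hn : n ∉ U) (hn0 : n ≠ 0) :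
    ∀ w : W, ∃ s : ℝ, w - s • n ∈ U := by
  have hsp : (ℝ ∙ n) ⊔ U = ⊤ := by
    apply Submodule.eq_top_of_finrank_eq
    have hinf : (ℝ ∙ n) ⊓ U = ⊥ := by
      rw [Submodule.eq_bot_iff]
      rintro x ⟨hx1, hx2⟩
      obtain ⟨s, rfl⟩ := Submodule.mem_span_singleton.mp hx1
      rcases eq_or_ne s 0 with rfl | hs
      · simp
      · exact absurd (by simpa [smul_smul, inv_mul_cancel₀ hs] using
          Submodule.smul_mem U s⁻¹ hx2) hn
    have hd := Submodule.finrank_sup_add_finrank_inf_eq (ℝ ∙ n) U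
    rw [hinf] at hd
    have h1 : finrank ℝ (ℝ ∙ n) = 1 := finrank_span_singleton hn0
    simp only [h1, hU, finrank_bot, add_zero] at hd
    rw [hd, hW]
    omega
  intro w
  have hw : w ∈ (ℝ ∙ n) ⊔ U := hsp ▸ Submodule.mem_top
  obtain ⟨a, ha, u, hu, rfl⟩ := Submodule.mem_sup.mp hw
  obtain ⟨s, rfl⟩ := Submodule.mem_span_singleton.mp ha
  exact ⟨s, by simpa⟩

set_option maxHeartbeats 1000000 in
/-- explicit form of the unique ∂-isometry `Ψ` determined by the
isometry `φ : (U,h) → (Ū,h̄)` and the nonzero scalar `μ`: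
`Ψ(n,0) = μ(θ̄,1)`, `Ψ(θ,1) = μ⁻¹(n̄,0)`, and for `v = σn + v∥`:
`Ψ(v,0) = (φ(v∥) + σμ(ᾱn̄ − ℓ̄♯), σμ)` and
`Ψ(0,1) = ((μ⁻¹ − μαᾱ)n̄ + μαℓ̄♯ + φ(ℓ♯), −μα)`. -/
theorem partial_isometry_explicit_form
    {V Vb : Type*} [AddCommGroup V] [Module ℝ V] [FiniteDimensional ℝ V]
    [AddCommGroup Vb] [Module ℝ Vb] [FiniteDimensional ℝ Vb]
    (m : ℕ) (hm : 2 ≤ m) (hV : finrank ℝ V = m) (hVb : finrank ℝ Vb = m)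
    (γ : V →ₗ[ℝ] V →ₗ[ℝ] ℝ) (hγsym : ∀ x y : V, γ x y = γ y x)
    (ℓ : V →ₗ[ℝ] ℝ) (ℓ2 : ℝ)
    (hA : ∀ v : V × ℝ, (∀ w : V × ℝ, calA γ ℓ ℓ2 v w = 0) → v = 0)
    (n : V) (hn : ∀ X : V, γ n X = 0) (hℓn : ℓ n = 1)
    (γb : Vb →ₗ[ℝ] Vb →ₗ[ℝ] ℝ) (hγbsym : ∀ x y : Vb, γb x y = γb y x)
    (ℓb : Vb →ₗ[ℝ] ℝ) (ℓ2b : ℝ)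
    (hAb : ∀ v : Vb × ℝ, (∀ w : Vb × ℝ, calA γb ℓb ℓ2b v w = 0) → v = 0)
    (nb : Vb) (hnb : ∀ X : Vb, γb nb X = 0) (hℓnb : ℓb nb = 1)
    (U : Submodule ℝ V) (hU : finrank ℝ U = m - 1)
    (hUnd : ∀ x ∈ U, (∀ y ∈ U, γ x y = 0) → x = 0)
    (Ub : Submodule ℝ Vb) (hUb : finrank ℝ Ub = m - 1)
    (hUbnd : ∀ x ∈ Ub, (∀ y ∈ Ub, γb x y = 0) → x = 0)
    (lsharp : U) (hls : ∀ X : U, γ (lsharp : V) (X : V) = ℓ (X : V))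
    (lsharpb : Ub) (hlsb : ∀ X : Ub, γb (lsharpb : Vb) (X : Vb) = ℓb (X : Vb))
    (α : ℝ) (hα : α = -(1 / 2) * (ℓ2 - γ (lsharp : V) (lsharp : V)))
    (αb : ℝ) (hαb : αb = -(1 / 2) * (ℓ2b - γb (lsharpb : Vb) (lsharpb : Vb)))
    (θ : V) (hθ : θ = α • n - (lsharp : V))
    (θb : Vb) (hθb : θb = αb • nb - (lsharpb : Vb))
    (φ : U ≃ₗ[ℝ] Ub)
    (hφ : ∀ X Y : U, γb (φ X : Vb) (φ Y : Vb) = γ (X : V) (Y : V))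
    (μ : ℝ) (hμ : μ ≠ 0)
    (Ψ : (V × ℝ) →ₗ[ℝ] (Vb × ℝ))
    (hΨ1 : ∀ X : U, Ψ ((X : V), 0) = ((φ X : Vb), 0))
    (hΨ2 : ∀ v w : V × ℝ, calA γb ℓb ℓ2b (Ψ v) (Ψ w) = calA γ ℓ ℓ2 v w)
    (hΨ3 : calA γb ℓb ℓ2b (nb, 0) (Ψ (n, 0)) = μ) :
    Ψ (n, 0) = μ • ((θb, (1 : ℝ)) : Vb × ℝ) ∧
    Ψ (θ, 1) = μ⁻¹ • ((nb, (0 : ℝ)) : Vb × ℝ) ∧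
    (∀ (σ : ℝ) (vp : U),
      Ψ (σ • n + (vp : V), 0)
        = ((φ vp : Vb) + (σ * μ) • (αb • nb - (lsharpb : Vb)), σ * μ)) ∧
    Ψ (0, 1)
      = ((μ⁻¹ - μ * α * αb) • nb + (μ * α) • (lsharpb : Vb) + (φ lsharp : Vb),
          -(μ * α)) := by
  -- basic facts
  have hnb0 : nb ≠ 0 := fun h => by simp [h] at hℓnb
  have hnbU : nb ∉ Ub := fun h => hnb0 (hUbnd nb h (fun y _ => hnb y))
  have hdec := aux_span_decomp hm hVb Ub hUb hnbU hnb0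
  have hγnb2 : ∀ X : Vb, γb X nb = 0 := fun X => (hγbsym X nb).trans (hnb X)
  -- radical lemma
  have hrad : ∀ e : Vb, (∀ Y : Ub, γb e (Y : Vb) = 0) → e = ℓb e • nb := by
    intro e he
    have hγe : ∀ X : Vb, γb (e - ℓb e • nb) X = 0 := by
      intro X
      obtain ⟨s, hs⟩ := hdec X
      have h2 : γb e (X - s • nb) = 0 := he ⟨_, hs⟩
      have h4 : γb e X = 0 := by
        have := h2
        simp only [map_sub, map_smul, hγnb2 e, smul_eq_mul, mul_zero, sub_zero] at this
        exact this
      simp [map_sub, map_smul, hnb, h4]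
    have h0 : ((e - ℓb e • nb, (0 : ℝ)) : Vb × ℝ) = 0 := by
      apply hAb
      intro z
      simp only [calA]
      rw [hγe z.1]
      simp [map_sub, map_smul, hℓnb]
    have := congrArg Prod.fst h0
    simpa [sub_eq_zero] using this
  -- scalar pairing facts
  have hlbl : ℓb (lsharpb : Vb) = γb (lsharpb : Vb) (lsharpb : Vb) := (hlsb lsharpb).symm
  have hγφls : γb (φ lsharp : Vb) (lsharpb : Vb) = ℓb (φ lsharp : Vb) := by
    rw [hγbsym]; exact hlsb _
  have hγlsφ : γb (lsharpb : Vb) (φ lsharp : Vb) = ℓb (φ lsharp : Vb) := hlsb _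
  have hγφφ : γb (φ lsharp : Vb) (φ lsharp : Vb) = γ (lsharp : V) (lsharp : V) := hφ _ _
  -- Step 1: second coordinate of Ψ(n,0)
  have hc : (Ψ (n, 0)).2 = μ := by
    have := hΨ3
    simpa [calA, hnb, hℓnb] using this
  -- Step 2: Ψ(n,0) = (k•nb + μ•θb, μ)
  obtain ⟨k, hPn⟩ : ∃ k : ℝ, Ψ (n, 0) = (k • nb + μ • θb, μ) := by
    have key : ∀ Y : Ub, γb ((Ψ (n, 0)).1) (Y : Vb) = -(μ * ℓb (Y : Vb)) := by
      intro Y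
      have h1 := hΨ2 (n, 0) ((φ.symm Y : V), 0)
      rw [hΨ1 (φ.symm Y)] at h1
      simp only [LinearEquiv.apply_symm_apply] at h1
      simp only [calA, hn, hc, mul_zero, zero_mul, add_zero, mul_one, zero_add] at h1
      linarith
    have key2 : ∀ Y : Ub, γb ((Ψ (n, 0)).1 - μ • θb) (Y : Vb) = 0 := by
      intro Y
      have h2 : γb θb (Y : Vb) = ℓb (Y : Vb) * (-1) := by
        rw [hθb]
        simp [map_sub, map_smul, hnb, hlsb Y]
      simp [map_sub, map_smul, key Y, h2]
    have h3 := hrad _ key2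
    refine ⟨ℓb ((Ψ (n, 0)).1 - μ • θb), ?_⟩
    have h5 : (Ψ (n, 0)).1 = ℓb ((Ψ (n, 0)).1 - μ • θb) • nb + μ • θb := by
      rw [← h3]; abel
    exact Prod.ext h5 hc
  -- Step 3: k = 0
  have hk : k = 0 := by
    have h4 := hΨ2 (n, 0) (n, 0)
    rw [hPn] at h4
    simp only [calA, hθb, hn, map_add, map_sub, map_smul, LinearMap.add_apply,
      LinearMap.sub_apply, LinearMap.smul_apply, smul_eq_mul, hnb, hγnb2, hℓnb, hlbl,
      mul_zero, zero_mul, add_zero, zero_add, sub_zero, zero_sub, mul_one] at h4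
    have hμ2 : μ * k ≠ 0 ∨ True := Or.inr trivial
    have : μ * k = 0 := by nlinarith [h4, hαb, sq_nonneg μ]
    rcases mul_eq_zero.mp this with h | h
    · exact absurd h hμ
    · exact h
  have hPn' : Ψ (n, 0) = (μ • θb, μ) := by rw [hPn, hk]; simp
  -- Ψ(0,1) decomposition
  obtain ⟨t, d, hQ⟩ : ∃ t d : ℝ,
      Ψ ((0 : V), 1) = (t • nb + ((φ lsharp : Vb) - d • (lsharpb : Vb)), d) := by
    have key : ∀ Y : Ub,
        γb ((Ψ ((0 : V), 1)).1 + (Ψ ((0 : V), 1)).2 • (lsharpb : Vb) - (φ lsharp : Vb))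
          (Y : Vb) = 0 := by
      intro Y
      have h1 := hΨ2 ((0 : V), 1) ((φ.symm Y : V), 0)
      rw [hΨ1 (φ.symm Y)] at h1
      simp only [LinearEquiv.apply_symm_apply] at h1
      simp only [calA, map_zero, LinearMap.zero_apply, zero_mul, mul_zero, add_zero,
        zero_add, one_mul, mul_one] at h1
      -- h1 : γb (Ψ(0,1)).1 Y + (Ψ(0,1)).2 * ℓb Y = ℓ (φ.symm Y)
      have h2 : ℓ ((φ.symm Y : U) : V) = γb (φ lsharp : Vb) (Y : Vb) := by
        rw [← hls, ← hφ lsharp (φ.symm Y)]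
        simp
      have h3 : γb (lsharpb : Vb) (Y : Vb) = ℓb (Y : Vb) := hlsb Y
      have h4 : γb ((Ψ ((0 : V), 1)).2 • (lsharpb : Vb)) (Y : Vb)
          = (Ψ ((0 : V), 1)).2 * ℓb (Y : Vb) := by
        rw [map_smul]; simp [h3]
      simp only [map_add, map_sub, LinearMap.add_apply, LinearMap.sub_apply, h4]
      rw [h2] at h1
      linarith
    have h3 := hrad _ key
    refine ⟨ℓb ((Ψ ((0 : V), 1)).1 + (Ψ ((0 : V), 1)).2 • (lsharpb : Vb) - (φ lsharp : Vb)),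
      (Ψ ((0 : V), 1)).2, ?_⟩
    refine Prod.ext ?_ rfl
    simp only
    rw [← h3]
    abel
  -- the two scalar equations
  have E1 := hΨ2 (n, 0) ((0 : V), 1)
  rw [hPn', hQ] at E1
  simp only [calA, hθb, map_zero, LinearMap.zero_apply, map_add, map_sub, map_smul,
    LinearMap.add_apply, LinearMap.sub_apply, LinearMap.smul_apply, smul_eq_mul,
    hnb, hγnb2, hℓnb, hlbl, hγφls, hγlsφ, hγφφ, hn, hℓn,
    mul_zero, zero_mul, add_zero, zero_add, sub_zero, zero_sub, mul_one, one_mul] at E1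
  have E2 := hΨ2 ((0 : V), 1) ((0 : V), 1)
  rw [hQ] at E2
  simp only [calA, map_zero, LinearMap.zero_apply, map_add, map_sub, map_smul,
    LinearMap.add_apply, LinearMap.sub_apply, LinearMap.smul_apply, smul_eq_mul,
    hnb, hγnb2, hℓnb, hlbl, hγφls, hγlsφ, hγφφ,
    mul_zero, zero_mul, add_zero, zero_add, sub_zero, zero_sub, mul_one, one_mul] at E2
  -- solve for d and t
  have h1 : μ * t - μ * d * αb = 1 := by linear_combination E1 - (2 * d * μ) * hαb
  have h2 : d * t - d * d * αb = -α := by linear_combination (1 / 2) * E2 - (d * d) * hαb + hα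
  have hd : d = -(μ * α) := by linear_combination μ * h2 - d * h1
  have ht : t = μ⁻¹ - μ * α * αb := by
    have hmt : μ * t = 1 - μ * μ * α * αb := by linear_combination h1 + μ * αb * hd
    field_simp
    linear_combination hmt
  -- final goals
  refine ⟨?_, ?_, ?_, ?_⟩
  · rw [hPn']
    refine Prod.ext ?_ ?_ <;> simp
  · have hsplit : ((θ, (1 : ℝ)) : V × ℝ)
        = α • ((n, 0) : V × ℝ) - (((lsharp : V), 0) : V × ℝ) + (((0 : V), 1) : V × ℝ) := by
      rw [hθ]
      refine Prod.ext ?_ ?_ <;> simp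
    rw [hsplit, map_add, map_sub, map_smul, hΨ1 lsharp, hPn', hQ]
    refine Prod.ext ?_ ?_
    · show α • (μ • θb) - (φ lsharp : Vb) + (t • nb + ((φ lsharp : Vb) - d • (lsharpb : Vb)))
        = μ⁻¹ • nb
      rw [hθb, ht, hd]
      module
    · show α • μ - 0 + d = μ⁻¹ • (0 : ℝ)
      rw [hd]
      simp [smul_eq_mul]
      ring
  · intro σ vp
    have hsplit : ((σ • n + (vp : V), (0 : ℝ)) : V × ℝ)
        = σ • ((n, 0) : V × ℝ) + (((vp : V), 0) : V × ℝ) := by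
      refine Prod.ext ?_ ?_ <;> simp
    rw [hsplit, map_add, map_smul, hΨ1 vp, hPn']
    refine Prod.ext ?_ ?_
    · show σ • (μ • θb) + (φ vp : Vb)
        = (φ vp : Vb) + (σ * μ) • (αb • nb - (lsharpb : Vb))
      rw [hθb]
      module
    · show σ • μ + 0 = σ * μ
      simp [smul_eq_mul]
  · rw [hQ]
    refine Prod.ext ?_ ?_
    · show t • nb + ((φ lsharp : Vb) - d • (lsharpb : Vb))
        = (μ⁻¹ - μ * α * αb) • nb + (μ * α) • (lsharpb : Vb) + (φ lsharp : Vb)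
      rw [ht, hd]
      module
    · show d = -(μ * α)
      exact hd
end

section
/- Let V and V̄ carry pointwise hypersurface metric data that is null with null generators n and n̄, let Ψ : V × ℝ → V̄ × ℝ be a linear map, and let (z,ζ) and (z̄,ζ̄) be gauge parameters on the two sides with maps G := G_{(z,ζ)}, Ḡ := G_{(z̄,ζ̄)} and transformed form 𝒜̄'. Set Ψ' := Ḡ⁻¹ ∘ Ψ ∘ G and let n' := z⁻¹·n and n̄' := z̄⁻¹·n̄ be the gauge-transformed null generators. Then the scalar μ := 𝒜̄((n̄,0), Ψ((n,0))) transforms as 𝒜̄'((n̄',0), Ψ'((n',0))) = z⁻¹·z̄⁻¹·μ. -/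
open Module

/-- The invertible linear map `G_{(z,ζ)} : V × ℝ → V × ℝ`, `(W,a) ↦ (W + a·z·ζ, a·z)`. -/
noncomputable def gaugeG {V : Type*} [AddCommGroup V] [Module ℝ V]
    (z : ℝ) (ζ : V) : V × ℝ → V × ℝ :=
  fun p => (p.1 + (p.2 * z) • ζ, p.2 * z)

/-- the scalar `μ = 𝒜̄((n̄,0), Ψ((n,0)))` transforms under gauge
transformations (with `Ψ' = Ḡ⁻¹ ∘ Ψ ∘ G`, `n' = z⁻¹n`, `n̄' = z̄⁻¹n̄`) as
`𝒜̄'((n̄',0), Ψ'((n',0))) = z⁻¹·z̄⁻¹·μ`. -/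
theorem mu_gauge_transform
    {V Vb : Type*} [AddCommGroup V] [Module ℝ V] [FiniteDimensional ℝ V]
    [AddCommGroup Vb] [Module ℝ Vb] [FiniteDimensional ℝ Vb]
    (γ : V →ₗ[ℝ] V →ₗ[ℝ] ℝ) (hγsym : ∀ x y : V, γ x y = γ y x)
    (ℓ : V →ₗ[ℝ] ℝ) (ℓ2 : ℝ)
    (n : V) (hn : ∀ X : V, γ n X = 0) (hℓn : ℓ n = 1)
    (γb : Vb →ₗ[ℝ] Vb →ₗ[ℝ] ℝ) (hγbsym : ∀ x y : Vb, γb x y = γb y x)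
    (ℓb : Vb →ₗ[ℝ] ℝ) (ℓ2b : ℝ)
    (nb : Vb) (hnb : ∀ X : Vb, γb nb X = 0) (hℓnb : ℓb nb = 1)
    (Ψ : (V × ℝ) →ₗ[ℝ] (Vb × ℝ))
    (z : ℝ) (hz : z ≠ 0) (ζ : V)
    (zb : ℝ) (hzb : zb ≠ 0) (ζb : Vb)
    (Ψ' : V × ℝ → Vb × ℝ)
    (hΨ' : ∀ v : V × ℝ, gaugeG zb ζb (Ψ' v) = Ψ (gaugeG z ζ v)) :
    calA γb (zb • (ℓb + γb ζb)) (zb ^ 2 * (ℓ2b + 2 * ℓb ζb + γb ζb ζb))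
        (zb⁻¹ • nb, 0) (Ψ' (z⁻¹ • n, 0))
      = z⁻¹ * zb⁻¹ * calA γb ℓb ℓ2b (nb, 0) (Ψ (n, 0)) := by
  have key := hΨ' (z⁻¹ • n, 0)
  have h1 : gaugeG z ζ ((z⁻¹ • n, 0) : V × ℝ) = z⁻¹ • ((n, 0) : V × ℝ) := by
    simp [gaugeG, Prod.smul_def]
  rw [h1, map_smul] at key
  have h2 : (Ψ' (z⁻¹ • n, 0)).2 * zb = z⁻¹ * (Ψ (n, 0)).2 := by
    have := congrArg Prod.snd key
    simpa [gaugeG, Prod.smul_def, smul_eq_mul] using this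
  have hp2 : (Ψ' (z⁻¹ • n, 0)).2 = z⁻¹ * zb⁻¹ * (Ψ (n, 0)).2 := by
    field_simp at h2 ⊢
    linarith [h2]
  have hζn : γb ζb nb = 0 := by rw [hγbsym]; exact hnb ζb
  simp [calA, hn, hnb, hℓn, hℓnb, hζn, hp2, map_smul, smul_eq_mul]
  field_simp
end
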